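/- Let R₁ ∈ ℝ^{s×s} be invertible and R₂ ∈ ℝ^{s×ℓ}. For the underdetermined system [R₁ R₂][v₁; v₂] = b̃, the basic solution v° = [R₁⁻¹b̃; 0] and the minimum norm solution v** satisfy ‖v°‖₂ ≤ (1 + ‖R₁⁻¹R₂‖₂²)^{1/2} ‖v**‖₂. -/

import Mathlib

noncomputable section
open Matrix

/-- Spectral (operator) norm of a real matrix. -/
def specNorm {α β : Type*} [Fintype α] [Fintype β] [DecidableEq β] (M : Matrix α β ℝ) : ℝ :=
  ‖LinearMap.toContinuousLinearMap (Matrix.toEuclideanLin M)‖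

/-- Euclidean norm of a vector. -/
def evnorm {ι : Type*} [Fintype ι] (v : ι → ℝ) : ℝ :=
  Real.sqrt (∑ j, v j ^ 2)

lemma evnorm_eq_norm {ι : Type*} [Fintype ι] (v : ι → ℝ) :
    evnorm v = ‖(WithLp.equiv 2 (ι → ℝ)).symm v‖ := by
  rw [EuclideanSpace.norm_eq, evnorm]
  congr 1
  apply Finset.sum_congr rfl
  intro i _
  rw [Real.norm_eq_abs, sq_abs]
  rfl

lemma evnorm_nonneg {ι : Type*} [Fintype ι] (v : ι → ℝ) : 0 ≤ evnorm v :=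
  Real.sqrt_nonneg _

lemma evnorm_mulVec_le {α β : Type*} [Fintype α] [Fintype β] [DecidableEq β]
    (M : Matrix α β ℝ) (x : β → ℝ) :
    evnorm (M *ᵥ x) ≤ specNorm M * evnorm x := by
  rw [evnorm_eq_norm, evnorm_eq_norm, specNorm]
  have := (LinearMap.toContinuousLinearMap (Matrix.toEuclideanLin M)).le_opNorm
      ((WithLp.equiv 2 (β → ℝ)).symm x)
  simpa using this

/-- For the underdetermined system `[R₁ R₂][v₁;v₂] = b`, the basic solution
`v° = [R₁⁻¹ b; 0]` and the minimum norm solution `v**` satisfy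
`‖v°‖₂ ≤ (1 + ‖R₁⁻¹R₂‖₂²)^{1/2} ‖v**‖₂`. -/
theorem basic_solution_norm_bound (s ℓ : ℕ)
    (R₁ : Matrix (Fin s) (Fin s) ℝ) (hR₁ : IsUnit R₁.det)
    (R₂ : Matrix (Fin s) (Fin ℓ) ℝ) (b : Fin s → ℝ)
    (vb : Fin s ⊕ Fin ℓ → ℝ) (hvb : vb = Sum.elim (R₁⁻¹ *ᵥ b) 0)
    (vm : Fin s ⊕ Fin ℓ → ℝ)
    (hvm : fromCols R₁ R₂ *ᵥ vm = b)
    (hmin : ∀ v : Fin s ⊕ Fin ℓ → ℝ, fromCols R₁ R₂ *ᵥ v = b → evnorm vm ≤ evnorm v) :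
    evnorm vb ≤ Real.sqrt (1 + specNorm (R₁⁻¹ * R₂) ^ 2) * evnorm vm := by
  set v1 : Fin s → ℝ := vm ∘ Sum.inl with hv1
  set v2 : Fin ℓ → ℝ := vm ∘ Sum.inr with hv2
  have hvm' : R₁ *ᵥ v1 + R₂ *ᵥ v2 = b := by
    rw [← hvm]
    ext i
    simp [mulVec, dotProduct, fromCols, Fintype.sum_sum_type, v1, v2, add_mul,
      Finset.sum_add_distrib]
  -- R₁⁻¹ b = v1 + (R₁⁻¹ R₂) v2
  have key : R₁⁻¹ *ᵥ b = v1 + (R₁⁻¹ * R₂) *ᵥ v2 := by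
    rw [← hvm', Matrix.mulVec_add, Matrix.mulVec_mulVec, Matrix.mulVec_mulVec,
      Matrix.nonsing_inv_mul _ hR₁, Matrix.one_mulVec]
  -- evnorm vb = evnorm (R₁⁻¹ b)
  have hvbn : evnorm vb = evnorm (R₁⁻¹ *ᵥ b) := by
    rw [hvb, evnorm, evnorm, Fintype.sum_sum_type]
    simp
  -- evnorm vm ^ 2 = evnorm v1 ^2 + evnorm v2 ^2
  have hsplit : evnorm vm ^ 2 = evnorm v1 ^ 2 + evnorm v2 ^ 2 := by
    have h1 : (0:ℝ) ≤ ∑ j, vm j ^ 2 := Finset.sum_nonneg fun i _ => sq_nonneg _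
    have h2 : (0:ℝ) ≤ ∑ j, v1 j ^ 2 := Finset.sum_nonneg fun i _ => sq_nonneg _
    have h3 : (0:ℝ) ≤ ∑ j, v2 j ^ 2 := Finset.sum_nonneg fun i _ => sq_nonneg _
    rw [evnorm, evnorm, evnorm, Real.sq_sqrt h1, Real.sq_sqrt h2, Real.sq_sqrt h3,
      Fintype.sum_sum_type]
    rfl
  have htri : evnorm (R₁⁻¹ *ᵥ b) ≤ evnorm v1 + specNorm (R₁⁻¹ * R₂) * evnorm v2 := by
    calc evnorm (R₁⁻¹ *ᵥ b) ≤ evnorm v1 + evnorm ((R₁⁻¹ * R₂) *ᵥ v2) := by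
          rw [key, evnorm_eq_norm, evnorm_eq_norm, evnorm_eq_norm]
          exact norm_add_le ((WithLp.equiv 2 (Fin s → ℝ)).symm v1)
            ((WithLp.equiv 2 (Fin s → ℝ)).symm ((R₁⁻¹ * R₂) *ᵥ v2))
      _ ≤ evnorm v1 + specNorm (R₁⁻¹ * R₂) * evnorm v2 := by
          have := evnorm_mulVec_le (R₁⁻¹ * R₂) v2
          linarith
  rw [hvbn]
  refine htri.trans ?_
  -- Cauchy-Schwarz style: a + k*c ≤ √(1+k²) √(a²+c²)
  set k := specNorm (R₁⁻¹ * R₂) with hk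
  have hk0 : 0 ≤ k := norm_nonneg _
  have ha : 0 ≤ evnorm v1 := evnorm_nonneg _
  have hc : 0 ≤ evnorm v2 := evnorm_nonneg _
  have hm : 0 ≤ evnorm vm := evnorm_nonneg _
  have hrhs : 0 ≤ Real.sqrt (1 + k ^ 2) * evnorm vm :=
    mul_nonneg (Real.sqrt_nonneg _) hm
  have hsq : (evnorm v1 + k * evnorm v2) ^ 2 ≤ (Real.sqrt (1 + k ^ 2) * evnorm vm) ^ 2 := by
    rw [mul_pow, Real.sq_sqrt (by positivity : (0:ℝ) ≤ 1 + k ^ 2), hsplit]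
    nlinarith [sq_nonneg (k * evnorm v1 - evnorm v2)]
  nlinarith [hsq, hrhs]
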